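/- arXiv:2210.08153 — 7 statements merged into one kernel-verified Lean document; each statement's English description precedes it below -/
import Mathlib

section
/- Let π_tar be a fully supported policy with soft Q function Q_{π_tar} and soft value function V_{π_tar}. Let Q̃ : S × A → ℝ and ε ≥ 0 satisfy |Q̃(s,a) − Q_{π_tar}(s,a)| ≤ ε for all states s and actions a. Let π_g be a guidance policy formed from a finite set Π of fully supported policies containing π_tar using Q̃, and assume π_g is fully supported. Then for all states s, V_{π_g}(s) ≥ V_{π_tar}(s) − 2ε/(1 − γ). -/
/-- Theorem 1, soft version.
Given an approximation `Qt` of the target policy's soft Q function within `ε`,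
a guidance policy `πg` formed by greedily aggregating a finite set `Ps` of
fully supported source policies (containing the target policy) with respect to
`Qt` satisfies `V_{πg}(s) ≥ V_{πtar}(s) - 2ε/(1-γ)` for all states `s`. -/
theorem soft_guidance_policy_improvement
    {S A : Type} [Fintype S] [Fintype A] [Nonempty S] [Nonempty A]
    -- MDP data
    (r : S → A → ℝ) (p : S → A → S → ℝ)
    (hp_nonneg : ∀ s a s', 0 ≤ p s a s')
    (hp_sum : ∀ s a, ∑ s' : S, p s a s' = 1)
    (γ : ℝ) (hγ0 : 0 ≤ γ) (hγ1 : γ < 1)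
    (α : ℝ) (hα : 0 < α)
    -- target policy (fully supported)
    (πtar : S → A → ℝ)
    (hπtar_pos : ∀ s a, 0 < πtar s a)
    (hπtar_sum : ∀ s, ∑ a : A, πtar s a = 1)
    -- soft Bellman equations for the target policy
    (Qtar : S → A → ℝ) (Vtar : S → ℝ)
    (hQtar : ∀ s a, Qtar s a = r s a + γ * ∑ s' : S, p s a s' * Vtar s')
    (hVtar : ∀ s, Vtar s = ∑ a : A, πtar s a * (Qtar s a - α * Real.log (πtar s a)))
    -- approximation of the soft Q function
    (Qt : S → A → ℝ) (ε : ℝ) (hε : 0 ≤ ε)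
    (hQt : ∀ s a, |Qt s a - Qtar s a| ≤ ε)
    -- finite set of fully supported source policies containing the target policy
    (Ps : Finset (S → A → ℝ))
    (hPs_pos : ∀ π ∈ Ps, ∀ s a, 0 < π s a)
    (hPs_sum : ∀ π ∈ Ps, ∀ s, ∑ a : A, π s a = 1)
    (hmem : πtar ∈ Ps)
    -- guidance policy: at each state, follows a maximizer of the approximate
    -- soft expected value among the policies in `Ps`
    (πg : S → A → ℝ)
    (hπg_pos : ∀ s a, 0 < πg s a)
    (hπg_sum : ∀ s, ∑ a : A, πg s a = 1)
    (hguide : ∀ s, ∃ πstar ∈ Ps,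
      (∀ π ∈ Ps,
        ∑ a : A, π s a * (Qt s a - α * Real.log (π s a)) ≤
          ∑ a : A, πstar s a * (Qt s a - α * Real.log (πstar s a))) ∧
      (∀ a, πg s a = πstar s a))
    -- soft Bellman equations for the guidance policy
    (Qg : S → A → ℝ) (Vg : S → ℝ)
    (hQg : ∀ s a, Qg s a = r s a + γ * ∑ s' : S, p s a s' * Vg s')
    (hVg : ∀ s, Vg s = ∑ a : A, πg s a * (Qg s a - α * Real.log (πg s a))) :
    ∀ s, Vg s ≥ Vtar s - 2 * ε / (1 - γ) := by

  obtain ⟨s0, -, hs0⟩ := Finset.exists_max_image (Finset.univ : Finset S)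
    (fun s => Vtar s - Vg s) Finset.univ_nonempty
  set M := Vtar s0 - Vg s0 with hM
  have hle : ∀ s, Vtar s - Vg s ≤ M := fun s => hs0 s (Finset.mem_univ s)
  have h1γ : 0 < 1 - γ := by linarith
  have key : ∀ s, Vtar s - Vg s ≤ 2 * ε + γ * M := by
    intro s
    obtain ⟨πs, hπsPs, hmax, heq⟩ := hguide s
    -- Step 1
    have h1 : Vtar s ≤ (∑ a : A, πtar s a * (Qt s a - α * Real.log (πtar s a))) + ε := by
      rw [hVtar]
      have hdiff : ∑ a : A, πtar s a * (Qtar s a - α * Real.log (πtar s a))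
           - ∑ a : A, πtar s a * (Qt s a - α * Real.log (πtar s a))
           = ∑ a : A, πtar s a * (Qtar s a - Qt s a) := by
        rw [← Finset.sum_sub_distrib]; exact Finset.sum_congr rfl fun a _ => by ring
      have h2 : ∑ a : A, πtar s a * (Qtar s a - Qt s a) ≤ ∑ a : A, πtar s a * ε := by
        refine Finset.sum_le_sum fun a _ => ?_
        have hb := abs_le.mp (hQt s a)
        have hp := (hπtar_pos s a).le
        nlinarith [hb.1, hb.2]
      have h3 : ∑ a : A, πtar s a * ε = ε := by
        rw [← Finset.sum_mul, hπtar_sum, one_mul]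
      linarith [hdiff ▸ (h3 ▸ h2)]
    -- Step 2: guidance maximization
    have h2 : (∑ a : A, πtar s a * (Qt s a - α * Real.log (πtar s a)))
        ≤ ∑ a : A, πg s a * (Qt s a - α * Real.log (πg s a)) := by
      have := hmax πtar hmem
      simpa [heq] using this
    -- Step 3
    have h3 : (∑ a : A, πg s a * (Qt s a - α * Real.log (πg s a)))
        ≤ (∑ a : A, πg s a * (Qtar s a - α * Real.log (πg s a))) + ε := by
      have hdiff : ∑ a : A, πg s a * (Qt s a - α * Real.log (πg s a))
           - ∑ a : A, πg s a * (Qtar s a - α * Real.log (πg s a))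
           = ∑ a : A, πg s a * (Qt s a - Qtar s a) := by
        rw [← Finset.sum_sub_distrib]; exact Finset.sum_congr rfl fun a _ => by ring
      have hb : ∑ a : A, πg s a * (Qt s a - Qtar s a) ≤ ∑ a : A, πg s a * ε := by
        refine Finset.sum_le_sum fun a _ => ?_
        have hb := abs_le.mp (hQt s a)
        have hp := (hπg_pos s a).le
        nlinarith [hb.1, hb.2]
      have h3' : ∑ a : A, πg s a * ε = ε := by
        rw [← Finset.sum_mul, hπg_sum, one_mul]
      linarith [hdiff ▸ (h3' ▸ hb)]
    -- Step 4
    have hQ : ∀ a, Qtar s a - Qg s a ≤ γ * M := by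
      intro a
      have hd : Qtar s a - Qg s a = γ * ∑ s' : S, p s a s' * (Vtar s' - Vg s') := by
        rw [hQtar, hQg]
        rw [show (∑ s' : S, p s a s' * (Vtar s' - Vg s'))
            = (∑ s' : S, p s a s' * Vtar s') - ∑ s' : S, p s a s' * Vg s' by
          rw [← Finset.sum_sub_distrib]; exact Finset.sum_congr rfl fun x _ => by ring]
        ring
      have hs : ∑ s' : S, p s a s' * (Vtar s' - Vg s') ≤ M := by
        calc ∑ s' : S, p s a s' * (Vtar s' - Vg s')
            ≤ ∑ s' : S, p s a s' * M :=
              Finset.sum_le_sum fun s' _ =>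
                mul_le_mul_of_nonneg_left (hle s') (hp_nonneg s a s')
          _ = M := by rw [← Finset.sum_mul, hp_sum, one_mul]
      rw [hd]
      exact mul_le_mul_of_nonneg_left hs hγ0
    have h4 : (∑ a : A, πg s a * (Qtar s a - α * Real.log (πg s a)))
        ≤ Vg s + γ * M := by
      rw [hVg]
      have hdiff : ∑ a : A, πg s a * (Qtar s a - α * Real.log (πg s a))
           - ∑ a : A, πg s a * (Qg s a - α * Real.log (πg s a))
           = ∑ a : A, πg s a * (Qtar s a - Qg s a) := by
        rw [← Finset.sum_sub_distrib]; exact Finset.sum_congr rfl fun a _ => by ring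
      have hb : ∑ a : A, πg s a * (Qtar s a - Qg s a) ≤ ∑ a : A, πg s a * (γ * M) :=
        Finset.sum_le_sum fun a _ =>
          mul_le_mul_of_nonneg_left (hQ a) (hπg_pos s a).le
      have h4' : ∑ a : A, πg s a * (γ * M) = γ * M := by
        rw [← Finset.sum_mul, hπg_sum, one_mul]
      linarith [hdiff ▸ (h4' ▸ hb)]
    linarith
  have hMle : M ≤ 2 * ε / (1 - γ) := by
    have := key s0
    rw [le_div_iff₀ h1γ]
    nlinarith [this]
  intro s
  have := hle s
  have := hMle
  linarith
end

section
/- Let π_tar be a policy with hard Q function Q_{π_tar} and value function V_{π_tar}. Let Q̃ : S × A → ℝ and ε ≥ 0 satisfy |Q̃(s,a) − Q_{π_tar}(s,a)| ≤ ε for all states s and actions a. Let π_g be a hard guidance policy formed from a finite set Π of policies containing π_tar using Q̃. Then for all states s, V_{π_g}(s) ≥ V_{π_tar}(s) − 2ε/(1 − γ). -/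
/-- Theorem 3, hard version.
Given an approximation `Qt` of the target policy's (hard) Q function within `ε`,
a hard guidance policy `πg` formed by greedily aggregating a finite set `Ps` of
source policies (containing the target policy) with respect to `Qt` satisfies
`V_{πg}(s) ≥ V_{πtar}(s) - 2ε/(1-γ)` for all states `s`. -/
theorem hard_guidance_policy_improvement
    {S A : Type} [Fintype S] [Fintype A] [Nonempty S] [Nonempty A]
    -- MDP data
    (r : S → A → ℝ) (p : S → A → S → ℝ)
    (hp_nonneg : ∀ s a s', 0 ≤ p s a s')
    (hp_sum : ∀ s a, ∑ s' : S, p s a s' = 1)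
    (γ : ℝ) (hγ0 : 0 ≤ γ) (hγ1 : γ < 1)
    -- target policy
    (πtar : S → A → ℝ)
    (hπtar_nonneg : ∀ s a, 0 ≤ πtar s a)
    (hπtar_sum : ∀ s, ∑ a : A, πtar s a = 1)
    -- Bellman equations for the target policy
    (Qtar : S → A → ℝ) (Vtar : S → ℝ)
    (hQtar : ∀ s a, Qtar s a = r s a + γ * ∑ s' : S, p s a s' * Vtar s')
    (hVtar : ∀ s, Vtar s = ∑ a : A, πtar s a * Qtar s a)
    -- approximation of the Q function
    (Qt : S → A → ℝ) (ε : ℝ) (hε : 0 ≤ ε)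
    (hQt : ∀ s a, |Qt s a - Qtar s a| ≤ ε)
    -- finite set of source policies containing the target policy
    (Ps : Finset (S → A → ℝ))
    (hPs_nonneg : ∀ π ∈ Ps, ∀ s a, 0 ≤ π s a)
    (hPs_sum : ∀ π ∈ Ps, ∀ s, ∑ a : A, π s a = 1)
    (hmem : πtar ∈ Ps)
    -- hard guidance policy
    (πg : S → A → ℝ)
    (hπg_nonneg : ∀ s a, 0 ≤ πg s a)
    (hπg_sum : ∀ s, ∑ a : A, πg s a = 1)
    (hguide : ∀ s, ∃ πstar ∈ Ps,
      (∀ π ∈ Ps,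
        ∑ a : A, π s a * Qt s a ≤ ∑ a : A, πstar s a * Qt s a) ∧
      (∀ a, πg s a = πstar s a))
    -- Bellman equations for the guidance policy
    (Qg : S → A → ℝ) (Vg : S → ℝ)
    (hQg : ∀ s a, Qg s a = r s a + γ * ∑ s' : S, p s a s' * Vg s')
    (hVg : ∀ s, Vg s = ∑ a : A, πg s a * Qg s a) :
    ∀ s, Vg s ≥ Vtar s - 2 * ε / (1 - γ) := by
  obtain ⟨s0, -, hs0⟩ := Finset.exists_max_image (Finset.univ : Finset S)
      (fun s => Vtar s - Vg s) ⟨Classical.arbitrary S, Finset.mem_univ _⟩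
  set δ := Vtar s0 - Vg s0 with hδ
  have hδmax : ∀ s, Vtar s - Vg s ≤ δ := fun s => hs0 s (Finset.mem_univ s)
  have h1 : ∀ s, Vtar s - 2 * ε ≤ ∑ a : A, πg s a * Qtar s a := by
    intro s
    obtain ⟨πstar, hmemstar, hmax, hagree⟩ := hguide s
    have hb : ∀ (π : S → A → ℝ), (∀ a, 0 ≤ π s a) → (∑ a : A, π s a = 1) →
        |∑ a : A, π s a * Qt s a - ∑ a : A, π s a * Qtar s a| ≤ ε := by
      intro π hnn hsum
      rw [← Finset.sum_sub_distrib]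
      calc |∑ a : A, (π s a * Qt s a - π s a * Qtar s a)|
          ≤ ∑ a : A, |π s a * Qt s a - π s a * Qtar s a| :=
            Finset.abs_sum_le_sum_abs _ _
        _ ≤ ∑ a : A, π s a * ε := by
            apply Finset.sum_le_sum
            intro a _
            rw [← mul_sub, abs_mul, abs_of_nonneg (hnn a)]
            exact mul_le_mul_of_nonneg_left (hQt s a) (hnn a)
        _ = ε := by rw [← Finset.sum_mul, hsum, one_mul]
    have hbtar := abs_le.mp (hb πtar (fun a => hπtar_nonneg s a) (hπtar_sum s))
    have hbg := abs_le.mp (hb πg (fun a => hπg_nonneg s a) (hπg_sum s))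
    have hstep : ∑ a : A, πtar s a * Qt s a ≤ ∑ a : A, πg s a * Qt s a := by
      have := hmax πtar hmem
      simpa [hagree] using this
    have hVs := hVtar s
    linarith [hbtar.1, hbg.2]
  have key : δ ≤ 2 * ε + γ * δ := by
    have h2 : ∀ a, Qtar s0 a - Qg s0 a ≤ γ * δ := by
      intro a
      rw [hQtar, hQg]
      have hsum : ∑ s' : S, p s0 a s' * Vtar s' - ∑ s' : S, p s0 a s' * Vg s' ≤ δ := by
        rw [← Finset.sum_sub_distrib]
        calc ∑ s' : S, (p s0 a s' * Vtar s' - p s0 a s' * Vg s')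
            = ∑ s' : S, p s0 a s' * (Vtar s' - Vg s') := by
              simp [mul_sub]
          _ ≤ ∑ s' : S, p s0 a s' * δ :=
              Finset.sum_le_sum (fun s' _ =>
                mul_le_mul_of_nonneg_left (hδmax s') (hp_nonneg s0 a s'))
          _ = δ := by rw [← Finset.sum_mul, hp_sum, one_mul]
      have := mul_le_mul_of_nonneg_left hsum hγ0
      linarith [this]
    have h3 : ∑ a : A, πg s0 a * (Qtar s0 a - Qg s0 a) ≤ γ * δ := by
      calc ∑ a : A, πg s0 a * (Qtar s0 a - Qg s0 a)
          ≤ ∑ a : A, πg s0 a * (γ * δ) :=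
            Finset.sum_le_sum (fun a _ =>
              mul_le_mul_of_nonneg_left (h2 a) (hπg_nonneg s0 a))
        _ = γ * δ := by rw [← Finset.sum_mul, hπg_sum, one_mul]
    have h4 := h1 s0
    have h5 : Vg s0 = ∑ a : A, πg s0 a * Qg s0 a := hVg s0
    have h6 : ∑ a : A, πg s0 a * Qtar s0 a - ∑ a : A, πg s0 a * Qg s0 a
        = ∑ a : A, πg s0 a * (Qtar s0 a - Qg s0 a) := by
      rw [← Finset.sum_sub_distrib]; simp [mul_sub]
    linarith
  have hγ' : 0 < 1 - γ := by linarith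
  have hδle : δ ≤ 2 * ε / (1 - γ) := by
    rw [le_div_iff₀ hγ']
    nlinarith
  intro s
  have := hδmax s
  linarith
end

section
/- Let π and π' be fully supported policies with soft value functions V_π and V_{π'}, and suppose D_KL(π'(·|s) ‖ π(·|s)) ≤ δ for all states s, where δ ≥ 0. Set R̃_max = max_{s,a} |r(s,a)|, H_max = max_s H(π'(·|s)), and H̃_max = max_s |H(π(·|s)) − H(π'(·|s))|. Then for all states s, V_π(s) − V_{π'}(s) ≤ √(2·ln 2·δ)·(R̃_max + α·H_max)/(1 − γ)² + α·H̃_max/(1 − γ). -/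
/-- Derivative helper for `log x - 2(x-1)/(x+1)`. -/
lemma svd_hasDerivAt_p {t : ℝ} (ht : 0 < t) :
    HasDerivAt (fun x : ℝ => Real.log x - 2*(x-1)/(x+1))
      ((t-1)^2/(t*(t+1)^2)) t := by
  have ht1 : t + 1 ≠ 0 := by positivity
  have h1 : HasDerivAt (fun x : ℝ => 2*(x-1)) 2 t := by
    simpa using (((hasDerivAt_id t).sub_const 1).const_mul 2)
  have h2 : HasDerivAt (fun x : ℝ => x+1) 1 t := (hasDerivAt_id t).add_const 1
  have h3 := (Real.hasDerivAt_log ht.ne').sub (h1.div h2 ht1)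
  refine h3.congr_deriv ?_
  field_simp
  ring

lemma svd_p_mono : MonotoneOn (fun x : ℝ => Real.log x - 2*(x-1)/(x+1)) (Set.Ioi 0) := by
  have hi : interior (Set.Ioi (0:ℝ)) = Set.Ioi 0 := interior_Ioi
  apply monotoneOn_of_deriv_nonneg (convex_Ioi 0)
  · intro x hx
    exact ((svd_hasDerivAt_p hx).continuousAt).continuousWithinAt
  · rw [hi]
    intro x hx
    exact (svd_hasDerivAt_p hx).differentiableAt.differentiableWithinAt
  · rw [hi]
    intro x hx
    have hx' : (0:ℝ) < x := hx
    rw [(svd_hasDerivAt_p hx').deriv]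
    positivity

lemma svd_log_ge {t : ℝ} (ht : 1 ≤ t) : 2*(t-1)/(t+1) ≤ Real.log t := by
  have h := svd_p_mono (Set.mem_Ioi.2 one_pos) (Set.mem_Ioi.2 (lt_of_lt_of_le one_pos ht)) ht
  simp only [Real.log_one] at h
  norm_num at h
  linarith

lemma svd_log_le {t : ℝ} (ht0 : 0 < t) (ht : t ≤ 1) : Real.log t ≤ 2*(t-1)/(t+1) := by
  have h := svd_p_mono (Set.mem_Ioi.2 ht0) (Set.mem_Ioi.2 one_pos) ht
  simp only [Real.log_one] at h
  norm_num at h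
  linarith
lemma svd_hasDerivAt_g {t : ℝ} (ht : 0 < t) :
    HasDerivAt (fun x : ℝ => 2*(x+2)*(x*Real.log x - x + 1) - 3*(x-1)^2)
      ((4*t+4)*Real.log t - 8*t + 8) t := by
  have h1 : HasDerivAt (fun x : ℝ => 2*(x+2)) 2 t := by
    simpa using (((hasDerivAt_id t).add_const 2).const_mul 2)
  have h2 : HasDerivAt (fun x : ℝ => x*Real.log x - x + 1) (Real.log t + 1 - 1) t :=
    ((Real.hasDerivAt_mul_log ht.ne').sub (hasDerivAt_id t)).add_const 1
  have h3 : HasDerivAt (fun x : ℝ => 3*(x-1)^2) (3*(2*(t-1))) t := by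
    simpa using ((((hasDerivAt_id t).sub_const 1).pow 2).const_mul 3)
  refine ((h1.mul h2).sub h3).congr_deriv ?_
  ring

lemma svd_g_nonneg {t : ℝ} (ht : 0 < t) :
    0 ≤ 2*(t+2)*(t*Real.log t - t + 1) - 3*(t-1)^2 := by
  set g : ℝ → ℝ := fun x => 2*(x+2)*(x*Real.log x - x + 1) - 3*(x-1)^2 with hg
  have hg1 : g 1 = 0 := by simp [hg]
  rcases le_or_gt 1 t with h1t | ht1
  · have hmono : MonotoneOn g (Set.Ici (1:ℝ)) := by
      apply monotoneOn_of_deriv_nonneg (convex_Ici 1)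
      · intro x hx
        have hx' : (0:ℝ) < x := lt_of_lt_of_le one_pos hx
        exact (svd_hasDerivAt_g hx').continuousAt.continuousWithinAt
      · rw [interior_Ici]
        intro x hx
        have hx' : (0:ℝ) < x := lt_trans one_pos hx
        exact (svd_hasDerivAt_g hx').differentiableAt.differentiableWithinAt
      · rw [interior_Ici]
        intro x hx
        have hx1 : (1:ℝ) ≤ x := le_of_lt hx
        have hx' : (0:ℝ) < x := lt_of_lt_of_le one_pos hx1
        rw [(svd_hasDerivAt_g hx').deriv]
        have hlog := svd_log_ge hx1
        have hx1' : (0:ℝ) < x + 1 := by linarith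
        have hkey : (4*x+4) * (2*(x-1)/(x+1)) = 8*(x-1) := by
          field_simp; ring
        nlinarith [mul_le_mul_of_nonneg_left hlog (by linarith : (0:ℝ) ≤ 4*x+4)]
    have := hmono (Set.mem_Ici.2 le_rfl) (Set.mem_Ici.2 h1t) h1t
    rw [hg1] at this; exact this
  · have hanti : AntitoneOn g (Set.Icc t 1) := by
      apply antitoneOn_of_deriv_nonpos (convex_Icc t 1)
      · intro x hx
        have hx' : (0:ℝ) < x := lt_of_lt_of_le ht hx.1
        exact (svd_hasDerivAt_g hx').continuousAt.continuousWithinAt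
      · rw [interior_Icc]
        intro x hx
        have hx' : (0:ℝ) < x := lt_trans ht hx.1
        exact (svd_hasDerivAt_g hx').differentiableAt.differentiableWithinAt
      · rw [interior_Icc]
        intro x hx
        have hx' : (0:ℝ) < x := lt_trans ht hx.1
        rw [(svd_hasDerivAt_g hx').deriv]
        have hlog := svd_log_le hx' (le_of_lt hx.2)
        have hx1' : (0:ℝ) < x + 1 := by linarith
        have hkey : (4*x+4) * (2*(x-1)/(x+1)) = 8*(x-1) := by
          field_simp; ring
        nlinarith [mul_le_mul_of_nonneg_left hlog (by linarith : (0:ℝ) ≤ 4*x+4)]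
    have := hanti (Set.mem_Icc.2 ⟨le_rfl, le_of_lt ht1⟩)
      (Set.mem_Icc.2 ⟨le_of_lt ht1, le_rfl⟩) (le_of_lt ht1)
    rw [hg1] at this; exact this
lemma svd_pointwise {a b : ℝ} (ha : 0 < a) (hb : 0 < b) :
    (a-b)^2/(a+2*b) ≤ (2/3) * (a * Real.log (a/b) - a + b) := by
  have habd : 0 < a + 2*b := by linarith
  rw [div_le_iff₀ habd]
  have hg := svd_g_nonneg (div_pos ha hb)
  have hkey : b^2 * (2*(a/b+2)*((a/b)*Real.log (a/b) - a/b + 1) - 3*(a/b-1)^2)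
      = 2*(a+2*b)*(a*Real.log (a/b) - a + b) - 3*(a-b)^2 := by
    field_simp
  nlinarith [mul_nonneg (sq_nonneg b) hg]

/-- Pinsker's inequality for finite probability vectors. -/
lemma svd_pinsker {A : Type} [Fintype A] (f g : A → ℝ)
    (hf : ∀ a, 0 < f a) (hg : ∀ a, 0 < g a)
    (hfs : ∑ a, f a = 1) (hgs : ∑ a, g a = 1) :
    (∑ a, |f a - g a|)^2 ≤ 2 * ∑ a, f a * Real.log (f a / g a) := by
  have hpos : ∀ a, (0:ℝ) < f a + 2 * g a := fun a => by
    have := hf a; have := hg a; linarith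
  -- Cauchy-Schwarz
  have hcs := Finset.sum_mul_sq_le_sq_mul_sq Finset.univ
    (fun a => |f a - g a| / Real.sqrt (f a + 2*g a))
    (fun a => Real.sqrt (f a + 2*g a))
  have he1 : ∀ a : A, |f a - g a| / Real.sqrt (f a + 2*g a) * Real.sqrt (f a + 2*g a)
      = |f a - g a| := fun a =>
    div_mul_cancel₀ _ (ne_of_gt (Real.sqrt_pos.2 (hpos a)))
  have he2 : ∀ a : A, (|f a - g a| / Real.sqrt (f a + 2*g a))^2
      = (f a - g a)^2 / (f a + 2*g a) := by
    intro a
    rw [div_pow, sq_abs, Real.sq_sqrt (le_of_lt (hpos a))]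
  have he3 : ∀ a : A, (Real.sqrt (f a + 2*g a))^2 = f a + 2*g a := fun a =>
    Real.sq_sqrt (le_of_lt (hpos a))
  simp only [he1, he2, he3] at hcs
  have hsum3 : ∑ a, (f a + 2*g a) = 3 := by
    rw [Finset.sum_add_distrib, ← Finset.mul_sum, hfs, hgs]; norm_num
  rw [hsum3] at hcs
  -- pointwise bound summed
  have hsumb : ∑ a, (f a - g a)^2/(f a + 2*g a)
      ≤ (2/3) * ∑ a, f a * Real.log (f a / g a) := by
    have h1 : ∑ a, (f a - g a)^2/(f a + 2*g a)
        ≤ ∑ a, (2/3) * (f a * Real.log (f a / g a) - f a + g a) :=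
      Finset.sum_le_sum (fun a _ => svd_pointwise (hf a) (hg a))
    calc ∑ a, (f a - g a)^2/(f a + 2*g a)
        ≤ ∑ a, (2/3) * (f a * Real.log (f a / g a) - f a + g a) := h1
      _ = (2/3) * ((∑ a, f a * Real.log (f a / g a)) - (∑ a, f a) + ∑ a, g a) := by
          rw [← Finset.mul_sum, Finset.sum_add_distrib, Finset.sum_sub_distrib]
      _ = (2/3) * ∑ a, f a * Real.log (f a / g a) := by rw [hfs, hgs]; ring
  calc (∑ a, |f a - g a|)^2 ≤ (∑ a, (f a - g a)^2/(f a + 2*g a)) * 3 := hcs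
    _ ≤ ((2/3) * ∑ a, f a * Real.log (f a / g a)) * 3 := by
        exact mul_le_mul_of_nonneg_right hsumb (by norm_num)
    _ = 2 * ∑ a, f a * Real.log (f a / g a) := by ring

/-- soft value difference bound via KL divergence.
If `D_KL(π'(·|s) ‖ π(·|s)) ≤ δ` at every state, then
`V_π(s) − V_{π'}(s) ≤ √(2 ln2 δ)(R̃max + α Hmax)/(1−γ)² + α H̃max/(1−γ)`. -/
theorem soft_value_difference_kl_bound
    {S A : Type} [Fintype S] [Fintype A] [Nonempty S] [Nonempty A]
    -- MDP data
    (r : S → A → ℝ) (p : S → A → S → ℝ)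
    (hp_nonneg : ∀ s a s', 0 ≤ p s a s')
    (hp_sum : ∀ s a, ∑ s' : S, p s a s' = 1)
    (γ : ℝ) (hγ0 : 0 ≤ γ) (hγ1 : γ < 1)
    (α : ℝ) (hα : 0 < α)
    -- fully supported policy π with its soft Bellman equations
    (π : S → A → ℝ)
    (hπ_pos : ∀ s a, 0 < π s a)
    (hπ_sum : ∀ s, ∑ a : A, π s a = 1)
    (Q : S → A → ℝ) (V : S → ℝ)
    (hQ : ∀ s a, Q s a = r s a + γ * ∑ s' : S, p s a s' * V s')
    (hV : ∀ s, V s = ∑ a : A, π s a * (Q s a - α * Real.log (π s a)))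
    -- fully supported policy π' with its soft Bellman equations
    (π' : S → A → ℝ)
    (hπ'_pos : ∀ s a, 0 < π' s a)
    (hπ'_sum : ∀ s, ∑ a : A, π' s a = 1)
    (Q' : S → A → ℝ) (V' : S → ℝ)
    (hQ' : ∀ s a, Q' s a = r s a + γ * ∑ s' : S, p s a s' * V' s')
    (hV' : ∀ s, V' s = ∑ a : A, π' s a * (Q' s a - α * Real.log (π' s a)))
    -- KL-divergence constraint (base-2 logarithm)
    (δ : ℝ) (hδ : 0 ≤ δ)
    (hKL : ∀ s, ∑ a : A, π' s a * Real.logb 2 (π' s a / π s a) ≤ δ)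
    -- the constants
    (Rmax : ℝ)
    (hRmax : Rmax = Finset.univ.sup' Finset.univ_nonempty
      (fun sa : S × A => |r sa.1 sa.2|))
    (Hmax : ℝ)
    (hHmax : Hmax = Finset.univ.sup' Finset.univ_nonempty
      (fun s : S => -∑ a : A, π' s a * Real.log (π' s a)))
    (Htmax : ℝ)
    (hHtmax : Htmax = Finset.univ.sup' Finset.univ_nonempty
      (fun s : S =>
        |(-∑ a : A, π s a * Real.log (π s a)) -
          (-∑ a : A, π' s a * Real.log (π' s a))|)) :
    ∀ s, V s - V' s ≤
        Real.sqrt (2 * Real.log 2 * δ) * (Rmax + α * Hmax) / (1 - γ) ^ 2 +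
        α * Htmax / (1 - γ) := by
  have h1γ : (0:ℝ) < 1 - γ := by linarith
  set c := Real.sqrt (2 * Real.log 2 * δ) with hc
  have hc0 : 0 ≤ c := Real.sqrt_nonneg _
  set Dmax := Finset.univ.sup' Finset.univ_nonempty (fun s : S => V s - V' s) with hDmax
  set CV := Finset.univ.sup' Finset.univ_nonempty (fun s : S => |V' s|) with hCV
  -- basic bounds on the constants
  have hRmax_ge : ∀ s a, |r s a| ≤ Rmax := by
    intro s a
    rw [hRmax]
    exact Finset.le_sup' (fun sa : S × A => |r sa.1 sa.2|) (Finset.mem_univ (s, a))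
  have hRmax0 : 0 ≤ Rmax :=
    le_trans (abs_nonneg _) (hRmax_ge (Classical.arbitrary S) (Classical.arbitrary A))
  have hπ'le1 : ∀ s a, π' s a ≤ 1 := by
    intro s a
    calc π' s a ≤ ∑ b : A, π' s b :=
          Finset.single_le_sum (fun b _ => (hπ'_pos s b).le) (Finset.mem_univ a)
      _ = 1 := hπ'_sum s
  have hH'_nonneg : ∀ s, 0 ≤ -∑ a : A, π' s a * Real.log (π' s a) := by
    intro s
    rw [← Finset.sum_neg_distrib]
    apply Finset.sum_nonneg
    intro a _
    rw [← mul_neg]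
    exact mul_nonneg (hπ'_pos s a).le
      (by simpa using Real.log_nonpos (hπ'_pos s a).le (hπ'le1 s a))
  have hHmax_ge : ∀ s, -∑ a : A, π' s a * Real.log (π' s a) ≤ Hmax := by
    intro s
    rw [hHmax]
    exact Finset.le_sup' (fun s : S => -∑ a : A, π' s a * Real.log (π' s a))
      (Finset.mem_univ s)
  have hHmax0 : 0 ≤ Hmax :=
    le_trans (hH'_nonneg (Classical.arbitrary S)) (hHmax_ge _)
  have hHtmax_ge : ∀ s,
      |(-∑ a : A, π s a * Real.log (π s a)) - (-∑ a : A, π' s a * Real.log (π' s a))|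
        ≤ Htmax := by
    intro s
    rw [hHtmax]
    exact Finset.le_sup' (fun s : S =>
      |(-∑ a : A, π s a * Real.log (π s a)) -
        (-∑ a : A, π' s a * Real.log (π' s a))|) (Finset.mem_univ s)
  have hCV_ge : ∀ s, |V' s| ≤ CV := by
    intro s
    rw [hCV]
    exact Finset.le_sup' (fun s : S => |V' s|) (Finset.mem_univ s)
  have hCV0 : 0 ≤ CV := le_trans (abs_nonneg _) (hCV_ge (Classical.arbitrary S))
  have hDmax_ge : ∀ s, V s - V' s ≤ Dmax := by
    intro s
    rw [hDmax]
    exact Finset.le_sup' (fun s : S => V s - V' s) (Finset.mem_univ s)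
  -- bound on |Q'|
  have hQ'b : ∀ s a, |Q' s a| ≤ Rmax + γ * CV := by
    intro s a
    rw [hQ' s a]
    have h1 : |∑ s' : S, p s a s' * V' s'| ≤ CV := by
      calc |∑ s' : S, p s a s' * V' s'| ≤ ∑ s' : S, |p s a s' * V' s'| :=
            Finset.abs_sum_le_sum_abs _ _
        _ ≤ ∑ s' : S, p s a s' * CV := by
            apply Finset.sum_le_sum
            intro s' _
            rw [abs_mul, abs_of_nonneg (hp_nonneg s a s')]
            exact mul_le_mul_of_nonneg_left (hCV_ge s') (hp_nonneg s a s')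
        _ = CV := by rw [← Finset.sum_mul, hp_sum s a, one_mul]
    calc |r s a + γ * ∑ s' : S, p s a s' * V' s'|
        ≤ |r s a| + |γ * ∑ s' : S, p s a s' * V' s'| := abs_add_le _ _
      _ = |r s a| + γ * |∑ s' : S, p s a s' * V' s'| := by
          rw [abs_mul, abs_of_nonneg hγ0]
      _ ≤ Rmax + γ * CV := by
          have := mul_le_mul_of_nonneg_left h1 hγ0
          exact add_le_add (hRmax_ge s a) this
  -- recursion for CV
  have hCVrec : CV ≤ Rmax + α * Hmax + γ * CV := by
    obtain ⟨s, _, hs⟩ := Finset.exists_mem_eq_sup' Finset.univ_nonempty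
      (fun s : S => |V' s|)
    have hCVeq : CV = |V' s| := hCV.trans hs
    calc CV = |∑ a : A, π' s a * (Q' s a - α * Real.log (π' s a))| := by
          rw [hCVeq, hV' s]
      _
        ≤ ∑ a : A, |π' s a * (Q' s a - α * Real.log (π' s a))| :=
          Finset.abs_sum_le_sum_abs _ _
      _ ≤ ∑ a : A, π' s a * ((Rmax + γ * CV) + α * (-Real.log (π' s a))) := by
          apply Finset.sum_le_sum
          intro a _
          rw [abs_mul, abs_of_nonneg (hπ'_pos s a).le]
          apply mul_le_mul_of_nonneg_left _ (hπ'_pos s a).le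
          calc |Q' s a - α * Real.log (π' s a)|
              ≤ |Q' s a| + |α * Real.log (π' s a)| := abs_sub _ _
            _ = |Q' s a| + α * |Real.log (π' s a)| := by
                rw [abs_mul, abs_of_nonneg hα.le]
            _ ≤ (Rmax + γ * CV) + α * (-Real.log (π' s a)) := by
                have hl : |Real.log (π' s a)| = -Real.log (π' s a) :=
                  abs_of_nonpos (Real.log_nonpos (hπ'_pos s a).le (hπ'le1 s a))
                rw [hl]
                exact add_le_add_left (hQ'b s a) _
      _ = (Rmax + γ * CV) * (∑ a : A, π' s a)
            + α * (-∑ a : A, π' s a * Real.log (π' s a)) := by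
          rw [Finset.mul_sum, ← Finset.sum_neg_distrib, Finset.mul_sum,
            ← Finset.sum_add_distrib]
          apply Finset.sum_congr rfl
          intro a _
          ring
      _ ≤ Rmax + α * Hmax + γ * CV := by
          rw [hπ'_sum s, mul_one]
          have := mul_le_mul_of_nonneg_left (hHmax_ge s) hα.le
          linarith
  set B := (Rmax + α * Hmax) / (1 - γ) with hB
  have hCVB : CV ≤ B := by
    rw [hB, le_div_iff₀ h1γ]
    nlinarith
  have hKQB : Rmax + γ * CV ≤ B := by
    rw [hB, le_div_iff₀ h1γ]
    nlinarith [mul_le_mul_of_nonneg_left hCVB hγ0, mul_nonneg hα.le hHmax0]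
  have hKQ0 : (0:ℝ) ≤ Rmax + γ * CV := by positivity
  -- Pinsker at each state
  have hL1 : ∀ s, ∑ a : A, |π s a - π' s a| ≤ c := by
    intro s
    have hpin := svd_pinsker (π' s) (π s) (hπ'_pos s) (hπ_pos s) (hπ'_sum s) (hπ_sum s)
    have hklnat : ∑ a : A, π' s a * Real.log (π' s a / π s a) ≤ Real.log 2 * δ := by
      have : ∑ a : A, π' s a * Real.log (π' s a / π s a)
          = Real.log 2 * ∑ a : A, π' s a * Real.logb 2 (π' s a / π s a) := by
        rw [Finset.mul_sum]
        apply Finset.sum_congr rfl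
        intro a _
        rw [Real.logb]
        have h2 : Real.log 2 ≠ 0 := by
          have := Real.log_pos one_lt_two; linarith
        field_simp
      rw [this]
      exact mul_le_mul_of_nonneg_left (hKL s) (Real.log_pos one_lt_two).le
    have hsq : (∑ a : A, |π' s a - π s a|)^2 ≤ 2 * Real.log 2 * δ := by
      calc (∑ a : A, |π' s a - π s a|)^2
          ≤ 2 * ∑ a : A, π' s a * Real.log (π' s a / π s a) := hpin
        _ ≤ 2 * (Real.log 2 * δ) := by linarith
        _ = 2 * Real.log 2 * δ := by ring
    have habs : ∀ a : A, |π s a - π' s a| = |π' s a - π s a| := fun a => abs_sub_comm _ _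
    simp only [habs]
    rw [hc]
    have hnn : 0 ≤ ∑ a : A, |π' s a - π s a| :=
      Finset.sum_nonneg (fun a _ => abs_nonneg _)
    calc ∑ a : A, |π' s a - π s a|
        = Real.sqrt ((∑ a : A, |π' s a - π s a|)^2) := (Real.sqrt_sq hnn).symm
      _ ≤ Real.sqrt (2 * Real.log 2 * δ) := Real.sqrt_le_sqrt hsq
  -- key per-state inequality
  have hkey : ∀ s, V s - V' s ≤ c * (Rmax + γ * CV) + γ * Dmax + α * Htmax := by
    intro s
    have e1 : ∀ (w : A → ℝ) (q : A → ℝ) (cc : A → ℝ),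
        ∑ a : A, w a * (q a - α * Real.log (cc a))
          = (∑ a : A, w a * q a) - α * ∑ a : A, w a * Real.log (cc a) := by
      intro w q cc
      rw [Finset.mul_sum, ← Finset.sum_sub_distrib]
      apply Finset.sum_congr rfl
      intro a _
      ring
    have e2 : ∑ a : A, (π s a - π' s a) * Q' s a
        = (∑ a : A, π s a * Q' s a) - ∑ a : A, π' s a * Q' s a := by
      rw [← Finset.sum_sub_distrib]
      apply Finset.sum_congr rfl
      intro a _
      ring
    have e3 : ∑ a : A, π s a * (Q s a - Q' s a)
        = (∑ a : A, π s a * Q s a) - ∑ a : A, π s a * Q' s a := by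
      rw [← Finset.sum_sub_distrib]
      apply Finset.sum_congr rfl
      intro a _
      ring
    have hdecomp : V s - V' s
        = (∑ a : A, (π s a - π' s a) * Q' s a)
          + (∑ a : A, π s a * (Q s a - Q' s a))
          + α * ((-∑ a : A, π s a * Real.log (π s a))
              - (-∑ a : A, π' s a * Real.log (π' s a))) := by
      rw [hV s, hV' s, e1, e1, e2, e3]
      ring
    have b1 : ∑ a : A, (π s a - π' s a) * Q' s a ≤ c * (Rmax + γ * CV) := by
      calc ∑ a : A, (π s a - π' s a) * Q' s a
          ≤ ∑ a : A, |π s a - π' s a| * (Rmax + γ * CV) := by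
            apply Finset.sum_le_sum
            intro a _
            calc (π s a - π' s a) * Q' s a ≤ |(π s a - π' s a) * Q' s a| := le_abs_self _
              _ = |π s a - π' s a| * |Q' s a| := abs_mul _ _
              _ ≤ |π s a - π' s a| * (Rmax + γ * CV) :=
                  mul_le_mul_of_nonneg_left (hQ'b s a) (abs_nonneg _)
        _ = (∑ a : A, |π s a - π' s a|) * (Rmax + γ * CV) := by
            rw [Finset.sum_mul]
        _ ≤ c * (Rmax + γ * CV) := mul_le_mul_of_nonneg_right (hL1 s) hKQ0
    have b2 : ∑ a : A, π s a * (Q s a - Q' s a) ≤ γ * Dmax := by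
      have hq : ∀ a, Q s a - Q' s a ≤ γ * Dmax := by
        intro a
        rw [hQ s a, hQ' s a]
        have h1 : ∑ s' : S, p s a s' * V s' - ∑ s' : S, p s a s' * V' s'
            = ∑ s' : S, p s a s' * (V s' - V' s') := by
          rw [← Finset.sum_sub_distrib]
          apply Finset.sum_congr rfl
          intro s' _
          ring
        have h2 : ∑ s' : S, p s a s' * (V s' - V' s') ≤ Dmax := by
          calc ∑ s' : S, p s a s' * (V s' - V' s') ≤ ∑ s' : S, p s a s' * Dmax :=
              Finset.sum_le_sum (fun s' _ =>
                mul_le_mul_of_nonneg_left (hDmax_ge s') (hp_nonneg s a s'))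
            _ = Dmax := by rw [← Finset.sum_mul, hp_sum s a, one_mul]
        have : γ * ∑ s' : S, p s a s' * V s' - γ * ∑ s' : S, p s a s' * V' s'
            = γ * ∑ s' : S, p s a s' * (V s' - V' s') := by rw [← h1]; ring
        have h3 := mul_le_mul_of_nonneg_left h2 hγ0
        linarith
      calc ∑ a : A, π s a * (Q s a - Q' s a) ≤ ∑ a : A, π s a * (γ * Dmax) :=
          Finset.sum_le_sum (fun a _ =>
            mul_le_mul_of_nonneg_left (hq a) (hπ_pos s a).le)
        _ = γ * Dmax := by rw [← Finset.sum_mul, hπ_sum s, one_mul]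
    have b3 : α * ((-∑ a : A, π s a * Real.log (π s a))
          - (-∑ a : A, π' s a * Real.log (π' s a))) ≤ α * Htmax := by
      apply mul_le_mul_of_nonneg_left _ hα.le
      exact le_trans (le_abs_self _) (hHtmax_ge s)
    rw [hdecomp]
    linarith
  -- close the recursion
  have hDrec : Dmax ≤ c * (Rmax + γ * CV) + γ * Dmax + α * Htmax := by
    obtain ⟨s, _, hs⟩ := Finset.exists_mem_eq_sup' Finset.univ_nonempty
      (fun s : S => V s - V' s)
    have hDeq : Dmax = V s - V' s := hDmax.trans hs
    calc Dmax = V s - V' s := hDeq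
      _ ≤ c * (Rmax + γ * CV) + γ * Dmax + α * Htmax := hkey s
  have hcKQ : c * (Rmax + γ * CV) ≤ c * B := mul_le_mul_of_nonneg_left hKQB hc0
  have hfinal : Dmax ≤ (c * B + α * Htmax) / (1 - γ) := by
    rw [le_div_iff₀ h1γ]
    nlinarith
  intro s
  have heq : (c * B + α * Htmax) / (1 - γ)
      = c * (Rmax + α * Hmax) / (1 - γ)^2 + α * Htmax / (1 - γ) := by
    rw [hB]
    field_simp
  calc V s - V' s ≤ Dmax := hDmax_ge s
    _ ≤ (c * B + α * Htmax) / (1 - γ) := hfinal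
    _ = _ := by rw [heq, hc]
end

section
/- Let π and π' be policies with hard value functions V_π and V_{π'}, with π fully supported, and suppose D_KL(π'(·|s) ‖ π(·|s)) ≤ δ for all states s, where δ ≥ 0. Set R̃_max = max_{s,a} |r(s,a)|. Then for all states s, V_π(s) − V_{π'}(s) ≤ √(2·ln 2·δ)·R̃_max/(1 − γ)². -/
/-!
Pinsker's inequality turns the KL bound into `∑ₐ |π'(a|s) - π(a|s)| ≤ √(2 ln 2 δ)` at every
state. For finite distributions it follows from the pointwise bound
`(m - n)² / w ≤ m log (m / n) - m + n` with weights `w = (2m + 4n) / 3`, which sum to `2`,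
and the Cauchy–Schwarz inequality `(∑ |μ - ν|)² / ∑ w ≤ ∑ (μ - ν)² / w`.

Next, `|Q_π| ≤ R̃max / (1 - γ)`, and splitting
`V_π - V_π' = ∑ₐ (π - π') Q_π + ∑ₐ π' (Q_π - Q_π')` with `Q_π - Q_π' = γ P (V_π - V_π')`
shows that the largest value `D` of `V_π - V_π'` satisfies
`D ≤ √(2 ln 2 δ) R̃max / (1 - γ) + γ D`.
-/

open Finset

section Pinsker

open Real

namespace Real

lemma hasDerivAt_log_sub_sub_one_mul_div {x : ℝ} (hx : 0 < x) :
    HasDerivAt (fun y => log y - (y - 1) * (5 * y + 1) / (2 * y * (y + 2)))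
      ((x - 1) ^ 3 / (x ^ 2 * (x + 2) ^ 2)) x := by
  have hnum : HasDerivAt (fun y : ℝ => (y - 1) * (5 * y + 1)) (10 * x - 4) x :=
    (((hasDerivAt_id' x).sub_const 1).mul
      (((hasDerivAt_id' x).const_mul 5).add_const 1)).congr_deriv (by ring)
  have hden : HasDerivAt (fun y : ℝ => 2 * y * (y + 2)) (4 * x + 4) x :=
    (((hasDerivAt_id' x).const_mul 2).mul ((hasDerivAt_id' x).add_const 2)).congr_deriv
      (by ring)
  exact ((hasDerivAt_log hx.ne').sub (hnum.div hden (by positivity))).congr_deriv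
    (by field_simp; ring)

-- The rational function is the one for which `sq_sub_div_le_mul_log_div_sub_add` below becomes
-- an identity.
lemma sub_one_mul_div_le_log {x : ℝ} (hx : 0 < x) :
    (x - 1) * (5 * x + 1) / (2 * x * (x + 2)) ≤ log x := by
  set g : ℝ → ℝ := fun y => log y - (y - 1) * (5 * y + 1) / (2 * y * (y + 2))
  have hg : ∀ y ∈ Set.Ioi (0 : ℝ), HasDerivAt g ((y - 1) ^ 3 / (y ^ 2 * (y + 2) ^ 2)) y :=
    fun y hy => hasDerivAt_log_sub_sub_one_mul_div hy
  have hcont : ∀ D ⊆ Set.Ioi (0 : ℝ), ContinuousOn g D :=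
    fun D hD y hy => (hg y (hD hy)).continuousAt.continuousWithinAt
  have hderiv : ∀ D ⊆ Set.Ioi (0 : ℝ), ∀ y ∈ interior D,
      HasDerivWithinAt g ((y - 1) ^ 3 / (y ^ 2 * (y + 2) ^ 2)) (interior D) y :=
    fun D hD y hy => (hg y (hD (interior_subset hy))).hasDerivWithinAt
  have hg1 : g 1 = 0 := by norm_num [g]
  suffices 0 ≤ g x by simpa [g, sub_nonneg] using this
  rcases le_total 1 x with h1 | h1
  · have hmono : MonotoneOn g (Set.Ici 1) :=
      monotoneOn_of_hasDerivWithinAt_nonneg (convex_Ici 1)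
        (hcont _ (Set.Ici_subset_Ioi.2 one_pos)) (hderiv _ (Set.Ici_subset_Ioi.2 one_pos))
        fun y hy => by
          rw [interior_Ici] at hy
          exact div_nonneg (pow_nonneg (by linarith [hy.out]) 3) (by positivity)
    simpa [hg1] using hmono Set.self_mem_Ici h1 h1
  · have hanti : AntitoneOn g (Set.Ioc 0 1) :=
      antitoneOn_of_hasDerivWithinAt_nonpos (convex_Ioc 0 1) (hcont _ Set.Ioc_subset_Ioi_self)
        (hderiv _ Set.Ioc_subset_Ioi_self)
        fun y hy => by
          rw [interior_Ioc] at hy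
          exact div_nonpos_of_nonpos_of_nonneg (Odd.pow_nonpos (by decide) (by linarith [hy.2]))
            (by positivity)
    simpa [hg1] using hanti ⟨hx, h1⟩ ⟨zero_lt_one, le_rfl⟩ h1

end Real

lemma sq_sub_div_le_mul_log_div_sub_add {m n : ℝ} (hm : 0 ≤ m) (hn : 0 < n) :
    (m - n) ^ 2 / ((2 * m + 4 * n) / 3) ≤ m * log (m / n) - m + n := by
  rw [div_le_iff₀ (by positivity)]
  rcases hm.eq_or_lt with rfl | hm
  · nlinarith
  have key : (m - n) * (5 * m + n) ≤ 2 * (m + 2 * n) * (m * log (m / n)) := by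
    have h := Real.sub_one_mul_div_le_log (div_pos hm hn)
    rw [div_le_iff₀ (by positivity)] at h
    field_simp at h
    nlinarith
  linear_combination key / 3

theorem sq_sum_abs_sub_le_two_mul_sum_mul_log {ι : Type*} [Fintype ι] {μ ν : ι → ℝ}
    (hμ : ∀ i, 0 ≤ μ i) (hν : ∀ i, 0 < ν i) (hμ1 : ∑ i, μ i = 1) (hν1 : ∑ i, ν i = 1) :
    (∑ i, |μ i - ν i|) ^ 2 ≤ 2 * ∑ i, μ i * log (μ i / ν i) := by
  set w : ι → ℝ := fun i => (2 * μ i + 4 * ν i) / 3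
  have hw : ∀ i ∈ univ, 0 < w i := fun i _ => by have := hμ i; have := hν i; positivity
  have hw2 : ∑ i, w i = 2 := by
    simp only [w, ← sum_div, sum_add_distrib, ← mul_sum, hμ1, hν1]
    norm_num
  have hpointwise : ∑ i, |μ i - ν i| ^ 2 / w i ≤ ∑ i, (μ i * log (μ i / ν i) - μ i + ν i) :=
    sum_le_sum fun i _ => by rw [sq_abs]; exact sq_sub_div_le_mul_log_div_sub_add (hμ i) (hν i)
  have hcancel : ∑ i, (μ i * log (μ i / ν i) - μ i + ν i) = ∑ i, μ i * log (μ i / ν i) := by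
    rw [sum_add_distrib, sum_sub_distrib, hμ1, hν1, sub_add_cancel]
  have := (sq_sum_div_le_sum_sq_div univ (fun i => |μ i - ν i|) hw).trans hpointwise
  rw [hw2, hcancel, div_le_iff₀ two_pos] at this
  linarith

theorem sum_abs_sub_le_sqrt_of_sum_mul_logb_le {ι : Type*} [Fintype ι] {μ ν : ι → ℝ}
    (hμ : ∀ i, 0 ≤ μ i) (hν : ∀ i, 0 < ν i) (hμ1 : ∑ i, μ i = 1) (hν1 : ∑ i, ν i = 1)
    {δ : ℝ} (hδ : ∑ i, μ i * logb 2 (μ i / ν i) ≤ δ) :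
    ∑ i, |μ i - ν i| ≤ √(2 * log 2 * δ) := by
  have hlog : ∑ i, μ i * log (μ i / ν i) = log 2 * ∑ i, μ i * logb 2 (μ i / ν i) := by
    simp only [mul_sum, logb]
    exact sum_congr rfl fun i _ => by field_simp
  refine le_sqrt_of_sq_le ((sq_sum_abs_sub_le_two_mul_sum_mul_log hμ hν hμ1 hν1).trans ?_)
  rw [hlog, mul_assoc]
  gcongr

end Pinsker

lemma le_div_one_sub_of_contraction {ι : Type*} [Fintype ι] {f : ι → ℝ} {b γ : ℝ} (hγ : γ < 1)
    (h : ∀ D, (∀ i, f i ≤ D) → ∀ i, f i ≤ b + γ * D) (i : ι) : f i ≤ b / (1 - γ) := by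
  have : Nonempty ι := ⟨i⟩
  obtain ⟨i₀, -, hi₀⟩ := exists_mem_eq_sup' univ_nonempty f
  have hD : ∀ j, f j ≤ f i₀ := fun j => hi₀ ▸ le_sup' f (mem_univ j)
  rw [le_div_iff₀ (by linarith)]
  nlinarith [hD i, h _ hD i₀]

lemma sum_mul_le_of_le {ι : Type*} [Fintype ι] {w g : ι → ℝ} {D : ℝ} (hw : ∀ i, 0 ≤ w i)
    (hw1 : ∑ i, w i = 1) (hg : ∀ i, g i ≤ D) : ∑ i, w i * g i ≤ D :=
  calc ∑ i, w i * g i ≤ ∑ i, w i * D :=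
        sum_le_sum fun i _ => mul_le_mul_of_nonneg_left (hg i) (hw i)
    _ = D := by rw [← sum_mul, hw1, one_mul]

lemma abs_sum_mul_le_of_abs_le {ι : Type*} [Fintype ι] {w g : ι → ℝ} {D : ℝ} (hw : ∀ i, 0 ≤ w i)
    (hw1 : ∑ i, w i = 1) (hg : ∀ i, |g i| ≤ D) : |∑ i, w i * g i| ≤ D :=
  calc |∑ i, w i * g i| ≤ ∑ i, w i * |g i| := by
        simpa only [abs_mul, abs_of_nonneg (hw _)] using
          abs_sum_le_sum_abs (fun i => w i * g i) univ
    _ ≤ D := sum_mul_le_of_le hw hw1 hg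

lemma sum_sub_mul_le_sum_abs_sub_mul {ι : Type*} [Fintype ι] {u v g : ι → ℝ} {C : ℝ}
    (hg : ∀ i, |g i| ≤ C) : ∑ i, (u i - v i) * g i ≤ (∑ i, |u i - v i|) * C := by
  rw [sum_mul]
  refine sum_le_sum fun i _ => ?_
  calc (u i - v i) * g i ≤ |u i - v i| * |g i| := by rw [← abs_mul]; exact le_abs_self _
    _ ≤ |u i - v i| * C := mul_le_mul_of_nonneg_left (hg i) (abs_nonneg _)

namespace MDP

variable {S A : Type*} [Fintype S] [Fintype A] {r : S → A → ℝ} {p : S → A → S → ℝ} {γ : ℝ}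
  {π : S → A → ℝ} {Q : S → A → ℝ} {V : S → ℝ}

lemma abs_q_le_div_one_sub (hp : ∀ s a s', 0 ≤ p s a s') (hp1 : ∀ s a, ∑ s', p s a s' = 1)
    (hγ0 : 0 ≤ γ) (hγ1 : γ < 1) (hπ : ∀ s a, 0 ≤ π s a) (hπ1 : ∀ s, ∑ a, π s a = 1)
    (hQ : ∀ s a, Q s a = r s a + γ * ∑ s', p s a s' * V s')
    (hV : ∀ s, V s = ∑ a, π s a * Q s a) {R : ℝ} (hr : ∀ s a, |r s a| ≤ R) (s : S) (a : A) :
    |Q s a| ≤ R / (1 - γ) := by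
  refine le_div_one_sub_of_contraction (f := fun sa : S × A => |Q sa.1 sa.2|) hγ1
    (fun D hD ⟨s, a⟩ => ?_) (s, a)
  have hVD : ∀ s', |V s'| ≤ D := fun s' => by
    rw [hV]; exact abs_sum_mul_le_of_abs_le (hπ s') (hπ1 s') fun a => hD (s', a)
  calc |Q s a| ≤ |r s a| + |γ * ∑ s', p s a s' * V s'| := by rw [hQ]; exact abs_add_le _ _
    _ ≤ R + γ * D := by
        rw [abs_mul, abs_of_nonneg hγ0]
        gcongr
        exacts [hr s a, abs_sum_mul_le_of_abs_le (hp s a) (hp1 s a) hVD]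

variable {π' : S → A → ℝ} {Q' : S → A → ℝ} {V' : S → ℝ}

lemma value_sub_value_le (hp : ∀ s a s', 0 ≤ p s a s') (hp1 : ∀ s a, ∑ s', p s a s' = 1)
    (hγ0 : 0 ≤ γ) (hγ1 : γ < 1)
    (hQ : ∀ s a, Q s a = r s a + γ * ∑ s', p s a s' * V s')
    (hV : ∀ s, V s = ∑ a, π s a * Q s a)
    (hπ' : ∀ s a, 0 ≤ π' s a) (hπ'1 : ∀ s, ∑ a, π' s a = 1)
    (hQ' : ∀ s a, Q' s a = r s a + γ * ∑ s', p s a s' * V' s')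
    (hV' : ∀ s, V' s = ∑ a, π' s a * Q' s a)
    {ε C : ℝ} (hTV : ∀ s, ∑ a, |π' s a - π s a| ≤ ε) (hQC : ∀ s a, |Q s a| ≤ C) (hC : 0 ≤ C)
    (s : S) : V s - V' s ≤ ε * C / (1 - γ) := by
  refine le_div_one_sub_of_contraction (f := fun s => V s - V' s) hγ1 (fun D hD s => ?_) s
  have hQQ' : ∀ a, Q s a - Q' s a ≤ γ * D := fun a => by
    rw [hQ, hQ', add_sub_add_left_eq_sub, ← mul_sub, ← sum_sub_distrib]
    simp only [← mul_sub]
    exact mul_le_mul_of_nonneg_left (sum_mul_le_of_le (hp s a) (hp1 s a) hD) hγ0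
  have hsplit : V s - V' s
      = ∑ a, (π s a - π' s a) * Q s a + ∑ a, π' s a * (Q s a - Q' s a) := by
    rw [hV, hV', ← sum_add_distrib, ← sum_sub_distrib]
    exact sum_congr rfl fun a _ => by ring
  have hpolicy : ∑ a, (π s a - π' s a) * Q s a ≤ ε * C := by
    refine (sum_sub_mul_le_sum_abs_sub_mul (hQC s)).trans ?_
    simp only [abs_sub_comm (π s _)]
    exact mul_le_mul_of_nonneg_right (hTV s) hC
  rw [hsplit]
  exact add_le_add hpolicy (sum_mul_le_of_le (hπ' s) (hπ'1 s) hQQ')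

end MDP

theorem hard_value_difference_kl_bound_general
    {S A : Type} [Fintype S] [Fintype A] [Nonempty S] [Nonempty A]
    -- MDP data
    (r : S → A → ℝ) (p : S → A → S → ℝ)
    (hp_nonneg : ∀ s a s', 0 ≤ p s a s')
    (hp_sum : ∀ s a, ∑ s' : S, p s a s' = 1)
    (γ : ℝ) (hγ0 : 0 ≤ γ) (hγ1 : γ < 1)
    -- fully supported policy π with its Bellman equations
    (π : S → A → ℝ)
    (hπ_pos : ∀ s a, 0 < π s a)
    (hπ_sum : ∀ s, ∑ a : A, π s a = 1)
    (Q : S → A → ℝ) (V : S → ℝ)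
    (hQ : ∀ s a, Q s a = r s a + γ * ∑ s' : S, p s a s' * V s')
    (hV : ∀ s, V s = ∑ a : A, π s a * Q s a)
    -- policy π' with its Bellman equations
    (π' : S → A → ℝ)
    (hπ'_nonneg : ∀ s a, 0 ≤ π' s a)
    (hπ'_sum : ∀ s, ∑ a : A, π' s a = 1)
    (Q' : S → A → ℝ) (V' : S → ℝ)
    (hQ' : ∀ s a, Q' s a = r s a + γ * ∑ s' : S, p s a s' * V' s')
    (hV' : ∀ s, V' s = ∑ a : A, π' s a * Q' s a)
    -- KL-divergence constraint (base-2 logarithm)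
    (δ : ℝ)
    (hKL : ∀ s, ∑ a : A, π' s a * Real.logb 2 (π' s a / π s a) ≤ δ)
    -- the reward bound
    (Rmax : ℝ)
    (hRmax : Rmax = Finset.univ.sup' Finset.univ_nonempty
      (fun sa : S × A => |r sa.1 sa.2|)) :
    ∀ s, V s - V' s ≤ Real.sqrt (2 * Real.log 2 * δ) * Rmax / (1 - γ) ^ 2 := by
  have hr : ∀ s a, |r s a| ≤ Rmax := fun s a =>
    hRmax ▸ le_sup' (fun sa : S × A => |r sa.1 sa.2|) (mem_univ (s, a))
  have hR : 0 ≤ Rmax := (abs_nonneg _).trans (hr (Classical.arbitrary S) (Classical.arbitrary A))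
  have hQb := MDP.abs_q_le_div_one_sub hp_nonneg hp_sum hγ0 hγ1 (fun s a => (hπ_pos s a).le)
    hπ_sum hQ hV hr
  have hTV : ∀ s, ∑ a, |π' s a - π s a| ≤ Real.sqrt (2 * Real.log 2 * δ) := fun s =>
    sum_abs_sub_le_sqrt_of_sum_mul_logb_le (hπ'_nonneg s) (hπ_pos s) (hπ'_sum s) (hπ_sum s)
      (hKL s)
  intro s
  calc V s - V' s ≤ Real.sqrt (2 * Real.log 2 * δ) * (Rmax / (1 - γ)) / (1 - γ) :=
        MDP.value_sub_value_le hp_nonneg hp_sum hγ0 hγ1 hQ hV hπ'_nonneg hπ'_sum hQ' hV' hTV hQb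
          (div_nonneg hR (by linarith)) s
    _ = Real.sqrt (2 * Real.log 2 * δ) * Rmax / (1 - γ) ^ 2 := by
        rw [← mul_div_assoc, div_div, sq]

/-- hard value difference bound via KL divergence.
If `π` is fully supported and `D_KL(π'(·|s) ‖ π(·|s)) ≤ δ` at every state, then
`V_π(s) − V_{π'}(s) ≤ √(2 ln2 δ)·R̃max/(1−γ)²`. -/
theorem hard_value_difference_kl_bound
    {S A : Type} [Fintype S] [Fintype A] [Nonempty S] [Nonempty A]
    -- MDP data
    (r : S → A → ℝ) (p : S → A → S → ℝ)
    (hp_nonneg : ∀ s a s', 0 ≤ p s a s')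
    (hp_sum : ∀ s a, ∑ s' : S, p s a s' = 1)
    (γ : ℝ) (hγ0 : 0 ≤ γ) (hγ1 : γ < 1)
    -- fully supported policy π with its Bellman equations
    (π : S → A → ℝ)
    (hπ_pos : ∀ s a, 0 < π s a)
    (hπ_sum : ∀ s, ∑ a : A, π s a = 1)
    (Q : S → A → ℝ) (V : S → ℝ)
    (hQ : ∀ s a, Q s a = r s a + γ * ∑ s' : S, p s a s' * V s')
    (hV : ∀ s, V s = ∑ a : A, π s a * Q s a)
    -- policy π' with its Bellman equations
    (π' : S → A → ℝ)
    (hπ'_nonneg : ∀ s a, 0 ≤ π' s a)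
    (hπ'_sum : ∀ s, ∑ a : A, π' s a = 1)
    (Q' : S → A → ℝ) (V' : S → ℝ)
    (hQ' : ∀ s a, Q' s a = r s a + γ * ∑ s' : S, p s a s' * V' s')
    (hV' : ∀ s, V' s = ∑ a : A, π' s a * Q' s a)
    -- KL-divergence constraint (base-2 logarithm)
    (δ : ℝ) (hδ : 0 ≤ δ)
    (hKL : ∀ s, ∑ a : A, π' s a * Real.logb 2 (π' s a / π s a) ≤ δ)
    -- the reward bound
    (Rmax : ℝ)
    (hRmax : Rmax = Finset.univ.sup' Finset.univ_nonempty
      (fun sa : S × A => |r sa.1 sa.2|)) :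
    ∀ s, V s - V' s ≤ Real.sqrt (2 * Real.log 2 * δ) * Rmax / (1 - γ) ^ 2 :=
  hard_value_difference_kl_bound_general r p hp_nonneg hp_sum γ hγ0 hγ1 π hπ_pos hπ_sum Q V hQ hV π'
    hπ'_nonneg hπ'_sum Q' V' hQ' hV' δ hKL Rmax hRmax
end

section
/- Let π and π' be fully supported policies with soft value functions V_π and V_{π'}, and suppose ‖π(·|s) − π'(·|s)‖₁ ≤ c for all states s, where c ≥ 0. Set R̃_max = max_{s,a} |r(s,a)|, H_max = max_s H(π'(·|s)), and H̃_max = max_s |H(π(·|s)) − H(π'(·|s))|. Then for all states s, V_π(s) − V_{π'}(s) ≤ c·(R̃_max + α·H_max)/(1 − γ)² + α·H̃_max/(1 − γ). -/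
/-- soft value difference bound via L1 distance.
If `‖π(·|s) − π'(·|s)‖₁ ≤ c` at every state, then
`V_π(s) − V_{π'}(s) ≤ c·(R̃max + α Hmax)/(1−γ)² + α H̃max/(1−γ)`. -/
theorem soft_value_difference_l1_bound
    {S A : Type} [Fintype S] [Fintype A] [Nonempty S] [Nonempty A]
    -- MDP data
    (r : S → A → ℝ) (p : S → A → S → ℝ)
    (hp_nonneg : ∀ s a s', 0 ≤ p s a s')
    (hp_sum : ∀ s a, ∑ s' : S, p s a s' = 1)
    (γ : ℝ) (hγ0 : 0 ≤ γ) (hγ1 : γ < 1)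
    (α : ℝ) (hα : 0 < α)
    -- fully supported policy π with its soft Bellman equations
    (π : S → A → ℝ)
    (hπ_pos : ∀ s a, 0 < π s a)
    (hπ_sum : ∀ s, ∑ a : A, π s a = 1)
    (Q : S → A → ℝ) (V : S → ℝ)
    (hQ : ∀ s a, Q s a = r s a + γ * ∑ s' : S, p s a s' * V s')
    (hV : ∀ s, V s = ∑ a : A, π s a * (Q s a - α * Real.log (π s a)))
    -- fully supported policy π' with its soft Bellman equations
    (π' : S → A → ℝ)
    (hπ'_pos : ∀ s a, 0 < π' s a)
    (hπ'_sum : ∀ s, ∑ a : A, π' s a = 1)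
    (Q' : S → A → ℝ) (V' : S → ℝ)
    (hQ' : ∀ s a, Q' s a = r s a + γ * ∑ s' : S, p s a s' * V' s')
    (hV' : ∀ s, V' s = ∑ a : A, π' s a * (Q' s a - α * Real.log (π' s a)))
    -- L1 distance constraint
    (c : ℝ) (hc : 0 ≤ c)
    (hL1 : ∀ s, ∑ a : A, |π s a - π' s a| ≤ c)
    -- the constants
    (Rmax : ℝ)
    (hRmax : Rmax = Finset.univ.sup' Finset.univ_nonempty
      (fun sa : S × A => |r sa.1 sa.2|))
    (Hmax : ℝ)
    (hHmax : Hmax = Finset.univ.sup' Finset.univ_nonempty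
      (fun s : S => -∑ a : A, π' s a * Real.log (π' s a)))
    (Htmax : ℝ)
    (hHtmax : Htmax = Finset.univ.sup' Finset.univ_nonempty
      (fun s : S =>
        |(-∑ a : A, π s a * Real.log (π s a)) -
          (-∑ a : A, π' s a * Real.log (π' s a))|)) :
    ∀ s, V s - V' s ≤
        c * (Rmax + α * Hmax) / (1 - γ) ^ 2 + α * Htmax / (1 - γ) := by
  have h1γ : (0:ℝ) < 1 - γ := by linarith
  -- entropy is nonnegative
  have hent : ∀ s, 0 ≤ -∑ a : A, π' s a * Real.log (π' s a) := by
    intro s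
    have hle : ∑ a : A, π' s a * Real.log (π' s a) ≤ 0 := by
      apply Finset.sum_nonpos
      intro a _
      have h1 : π' s a ≤ 1 := by
        have := Finset.single_le_sum (f := fun a => π' s a)
          (fun a _ => (hπ'_pos s a).le) (Finset.mem_univ a)
        rw [hπ'_sum s] at this; exact this
      exact mul_nonpos_of_nonneg_of_nonpos (hπ'_pos s a).le
        (Real.log_nonpos (hπ'_pos s a).le h1)
    linarith
  have hHmaxle : ∀ s, -∑ a : A, π' s a * Real.log (π' s a) ≤ Hmax := by
    intro s; rw [hHmax]
    exact Finset.le_sup' (fun s : S => -∑ a : A, π' s a * Real.log (π' s a))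
      (Finset.mem_univ s)
  have hHmax0 : 0 ≤ Hmax :=
    le_trans (hent (Classical.arbitrary S)) (hHmaxle _)
  have hHtmaxle : ∀ s,
      |(-∑ a : A, π s a * Real.log (π s a)) -
        (-∑ a : A, π' s a * Real.log (π' s a))| ≤ Htmax := by
    intro s; rw [hHtmax]
    exact Finset.le_sup' (fun s : S =>
      |(-∑ a : A, π s a * Real.log (π s a)) -
        (-∑ a : A, π' s a * Real.log (π' s a))|) (Finset.mem_univ s)
  have hHtmax0 : 0 ≤ Htmax :=
    le_trans (abs_nonneg _) (hHtmaxle (Classical.arbitrary S))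
  have hRmaxle : ∀ s a, |r s a| ≤ Rmax := by
    intro s a; rw [hRmax]
    exact Finset.le_sup' (fun sa : S × A => |r sa.1 sa.2|) (Finset.mem_univ (s, a))
  set Qm : ℝ := Finset.univ.sup' Finset.univ_nonempty
      (fun sa : S × A => |Q' sa.1 sa.2|) with hQmdef
  have hQmle : ∀ s a, |Q' s a| ≤ Qm := by
    intro s a
    exact Finset.le_sup' (fun sa : S × A => |Q' sa.1 sa.2|) (Finset.mem_univ (s, a))
  have hQm0 : 0 ≤ Qm :=
    le_trans (abs_nonneg _)
      (hQmle (Classical.arbitrary S) (Classical.arbitrary A))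
  -- split value into mean-Q plus entropy part
  have hVsplit : ∀ s, V' s = (∑ a : A, π' s a * Q' s a)
      + α * (-∑ a : A, π' s a * Real.log (π' s a)) := by
    intro s
    rw [hV' s]
    have e : ∑ a : A, π' s a * (Q' s a - α * Real.log (π' s a))
        = ∑ a : A, (π' s a * Q' s a + α * -(π' s a * Real.log (π' s a))) := by
      apply Finset.sum_congr rfl; intro a _; ring
    rw [e, Finset.sum_add_distrib, ← Finset.mul_sum, Finset.sum_neg_distrib]
  -- |V'| bound
  have hV'b : ∀ s, |V' s| ≤ Qm + α * Hmax := by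
    intro s
    rw [hVsplit s]
    have h1 : |∑ a : A, π' s a * Q' s a| ≤ Qm := by
      calc |∑ a : A, π' s a * Q' s a| ≤ ∑ a : A, |π' s a * Q' s a| :=
            Finset.abs_sum_le_sum_abs _ _
        _ ≤ ∑ a : A, π' s a * Qm := by
            apply Finset.sum_le_sum
            intro a _
            rw [abs_mul, abs_of_pos (hπ'_pos s a)]
            exact mul_le_mul_of_nonneg_left (hQmle s a) (hπ'_pos s a).le
        _ = Qm := by rw [← Finset.sum_mul, hπ'_sum s, one_mul]
    have h2 : α * (-∑ a : A, π' s a * Real.log (π' s a)) ≤ α * Hmax :=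
      mul_le_mul_of_nonneg_left (hHmaxle s) hα.le
    have h3 : 0 ≤ α * (-∑ a : A, π' s a * Real.log (π' s a)) :=
      mul_nonneg hα.le (hent s)
    calc |∑ a : A, π' s a * Q' s a + α * (-∑ a : A, π' s a * Real.log (π' s a))|
        ≤ |∑ a : A, π' s a * Q' s a| +
          |α * (-∑ a : A, π' s a * Real.log (π' s a))| := abs_add_le _ _
      _ ≤ Qm + α * Hmax := by
          rw [abs_of_nonneg h3]; exact add_le_add h1 h2
  -- Qm bound
  have hQmB : Qm * (1 - γ) ≤ Rmax + α * Hmax := by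
    have hb : ∀ s a, |Q' s a| ≤ Rmax + γ * (Qm + α * Hmax) := by
      intro s a
      rw [hQ' s a]
      have hps : |∑ s' : S, p s a s' * V' s'| ≤ Qm + α * Hmax := by
        calc |∑ s' : S, p s a s' * V' s'| ≤ ∑ s' : S, |p s a s' * V' s'| :=
              Finset.abs_sum_le_sum_abs _ _
          _ ≤ ∑ s' : S, p s a s' * (Qm + α * Hmax) := by
              apply Finset.sum_le_sum
              intro s' _
              rw [abs_mul, abs_of_nonneg (hp_nonneg s a s')]
              exact mul_le_mul_of_nonneg_left (hV'b s') (hp_nonneg s a s')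
          _ = Qm + α * Hmax := by rw [← Finset.sum_mul, hp_sum s a, one_mul]
      calc |r s a + γ * ∑ s' : S, p s a s' * V' s'|
          ≤ |r s a| + |γ * ∑ s' : S, p s a s' * V' s'| := abs_add_le _ _
        _ ≤ Rmax + γ * (Qm + α * Hmax) := by
            rw [abs_mul, abs_of_nonneg hγ0]
            exact add_le_add (hRmaxle s a) (mul_le_mul_of_nonneg_left hps hγ0)
    have : Qm ≤ Rmax + γ * (Qm + α * Hmax) := by
      rw [hQmdef]
      apply Finset.sup'_le
      intro sa _
      exact hb sa.1 sa.2
    nlinarith [mul_nonneg hα.le hHmax0]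
  -- the sup of value differences
  set D : ℝ := Finset.univ.sup' Finset.univ_nonempty (fun s : S => V s - V' s)
    with hDdef
  have hDle : ∀ s, V s - V' s ≤ D := by
    intro s; exact Finset.le_sup' (fun s : S => V s - V' s) (Finset.mem_univ s)
  have hkey : ∀ s, V s - V' s ≤ c * Qm + γ * D + α * Htmax := by
    intro s
    have hVsplit' : V s = (∑ a : A, π s a * Q s a)
        + α * (-∑ a : A, π s a * Real.log (π s a)) := by
      rw [hV s]
      have e : ∑ a : A, π s a * (Q s a - α * Real.log (π s a))
          = ∑ a : A, (π s a * Q s a + α * -(π s a * Real.log (π s a))) := by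
        apply Finset.sum_congr rfl; intro a _; ring
      rw [e, Finset.sum_add_distrib, ← Finset.mul_sum, Finset.sum_neg_distrib]
    have hdec : V s - V' s = (∑ a : A, π s a * (Q s a - Q' s a))
        + (∑ a : A, (π s a - π' s a) * Q' s a)
        + α * ((-∑ a : A, π s a * Real.log (π s a))
              - (-∑ a : A, π' s a * Real.log (π' s a))) := by
      rw [hVsplit', hVsplit s]
      have e1 : ∑ a : A, π s a * (Q s a - Q' s a)
          = (∑ a : A, π s a * Q s a) - ∑ a : A, π s a * Q' s a := by
        rw [← Finset.sum_sub_distrib]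
        apply Finset.sum_congr rfl; intro a _; ring
      have e2 : ∑ a : A, (π s a - π' s a) * Q' s a
          = (∑ a : A, π s a * Q' s a) - ∑ a : A, π' s a * Q' s a := by
        rw [← Finset.sum_sub_distrib]
        apply Finset.sum_congr rfl; intro a _; ring
      rw [e1, e2]; ring
    rw [hdec]
    have hQdiff : ∀ a, Q s a - Q' s a ≤ γ * D := by
      intro a
      rw [hQ s a, hQ' s a]
      have : (∑ s' : S, p s a s' * V s') - ∑ s' : S, p s a s' * V' s' ≤ D := by
        rw [← Finset.sum_sub_distrib]
        calc ∑ s' : S, (p s a s' * V s' - p s a s' * V' s')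
            = ∑ s' : S, p s a s' * (V s' - V' s') := by
              apply Finset.sum_congr rfl; intro s' _; ring
          _ ≤ ∑ s' : S, p s a s' * D := by
              apply Finset.sum_le_sum
              intro s' _
              exact mul_le_mul_of_nonneg_left (hDle s') (hp_nonneg s a s')
          _ = D := by rw [← Finset.sum_mul, hp_sum s a, one_mul]
      nlinarith [this]
    have t1 : ∑ a : A, π s a * (Q s a - Q' s a) ≤ γ * D := by
      calc ∑ a : A, π s a * (Q s a - Q' s a) ≤ ∑ a : A, π s a * (γ * D) := by
            apply Finset.sum_le_sum
            intro a _
            exact mul_le_mul_of_nonneg_left (hQdiff a) (hπ_pos s a).le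
        _ = γ * D := by rw [← Finset.sum_mul, hπ_sum s, one_mul]
    have t2 : ∑ a : A, (π s a - π' s a) * Q' s a ≤ c * Qm := by
      calc ∑ a : A, (π s a - π' s a) * Q' s a
          ≤ ∑ a : A, |(π s a - π' s a) * Q' s a| := by
            apply Finset.sum_le_sum; intro a _; exact le_abs_self _
        _ = ∑ a : A, |π s a - π' s a| * |Q' s a| := by
            apply Finset.sum_congr rfl; intro a _; rw [abs_mul]
        _ ≤ ∑ a : A, |π s a - π' s a| * Qm := by
            apply Finset.sum_le_sum
            intro a _
            exact mul_le_mul_of_nonneg_left (hQmle s a) (abs_nonneg _)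
        _ = (∑ a : A, |π s a - π' s a|) * Qm := by rw [Finset.sum_mul]
        _ ≤ c * Qm := mul_le_mul_of_nonneg_right (hL1 s) hQm0
    have t3 : α * ((-∑ a : A, π s a * Real.log (π s a))
          - (-∑ a : A, π' s a * Real.log (π' s a))) ≤ α * Htmax :=
      mul_le_mul_of_nonneg_left (le_trans (le_abs_self _) (hHtmaxle s)) hα.le
    linarith
  have hDB : D * (1 - γ) ≤ c * Qm + α * Htmax := by
    have : D ≤ c * Qm + γ * D + α * Htmax := by
      rw [hDdef]
      apply Finset.sup'_le
      intro s _
      exact hkey s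
    nlinarith [this]
  intro s
  have hfin : (V s - V' s) * (1 - γ) ^ 2 ≤ c * (Rmax + α * Hmax)
      + α * Htmax * (1 - γ) := by
    nlinarith [hDle s, mul_le_mul_of_nonneg_right hDB h1γ.le,
      mul_le_mul_of_nonneg_left hQmB hc,
      mul_le_mul_of_nonneg_right (hDle s) h1γ.le, sq_nonneg (1 - γ)]
  have heq : c * (Rmax + α * Hmax) / (1 - γ) ^ 2 + α * Htmax / (1 - γ)
      = (c * (Rmax + α * Hmax) + α * Htmax * (1 - γ)) / (1 - γ) ^ 2 := by
    field_simp
  rw [heq, le_div_iff₀ (by positivity)]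
  linarith [hfin]
end

section
/- Let π_tar be a fully supported policy with soft Q function Q_{π_tar} and soft value function V_{π_tar}. Let Q̃ : S × A → ℝ and ε ≥ 0 satisfy |Q̃(s,a) − Q_{π_tar}(s,a)| ≤ ε for all states s and actions a. Let π_g be a guidance policy formed from a finite set Π of fully supported policies containing π_tar using Q̃, and assume π_g is fully supported. Then for all states s, Σ_a π_g(a|s)·(Q_{π_tar}(s,a) − α log π_g(a|s)) ≥ V_{π_tar}(s) − 2ε; that is, the soft expected advantage of π_g over π_tar at every state is at least −2ε. -/
/-- soft expected advantage of the guidance policy.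
The guidance policy formed from an `ε`-accurate approximation of the target
policy's soft Q function has soft expected advantage at least `−2ε` over the
target policy at every state:
`Σ_a πg(a|s)(Q_{πtar}(s,a) − α log πg(a|s)) ≥ V_{πtar}(s) − 2ε`. -/
theorem soft_guidance_expected_advantage
    {S A : Type} [Fintype S] [Fintype A] [Nonempty S] [Nonempty A]
    -- MDP data
    (r : S → A → ℝ) (p : S → A → S → ℝ)
    (hp_nonneg : ∀ s a s', 0 ≤ p s a s')
    (hp_sum : ∀ s a, ∑ s' : S, p s a s' = 1)
    (γ : ℝ) (hγ0 : 0 ≤ γ) (hγ1 : γ < 1)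
    (α : ℝ) (hα : 0 < α)
    -- target policy (fully supported)
    (πtar : S → A → ℝ)
    (hπtar_pos : ∀ s a, 0 < πtar s a)
    (hπtar_sum : ∀ s, ∑ a : A, πtar s a = 1)
    -- soft Bellman equations for the target policy
    (Qtar : S → A → ℝ) (Vtar : S → ℝ)
    (hQtar : ∀ s a, Qtar s a = r s a + γ * ∑ s' : S, p s a s' * Vtar s')
    (hVtar : ∀ s, Vtar s = ∑ a : A, πtar s a * (Qtar s a - α * Real.log (πtar s a)))
    -- approximation of the soft Q function
    (Qt : S → A → ℝ) (ε : ℝ) (hε : 0 ≤ ε)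
    (hQt : ∀ s a, |Qt s a - Qtar s a| ≤ ε)
    -- finite set of fully supported source policies containing the target policy
    (Ps : Finset (S → A → ℝ))
    (hPs_pos : ∀ π ∈ Ps, ∀ s a, 0 < π s a)
    (hPs_sum : ∀ π ∈ Ps, ∀ s, ∑ a : A, π s a = 1)
    (hmem : πtar ∈ Ps)
    -- guidance policy, assumed fully supported
    (πg : S → A → ℝ)
    (hπg_pos : ∀ s a, 0 < πg s a)
    (hπg_sum : ∀ s, ∑ a : A, πg s a = 1)
    (hguide : ∀ s, ∃ πstar ∈ Ps,
      (∀ π ∈ Ps,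
        ∑ a : A, π s a * (Qt s a - α * Real.log (π s a)) ≤
          ∑ a : A, πstar s a * (Qt s a - α * Real.log (πstar s a))) ∧
      (∀ a, πg s a = πstar s a)) :
    ∀ s, ∑ a : A, πg s a * (Qtar s a - α * Real.log (πg s a)) ≥ Vtar s - 2 * ε := by
  intro s
  obtain ⟨πstar, hstar_mem, hmax, heq⟩ := hguide s
  -- key error bound: for a probability vector π, |∑ π (Qt - Qtar)| ≤ ε
  have key : ∀ π : S → A → ℝ, (∀ a, 0 < π s a) → (∑ a : A, π s a = 1) →
      |∑ a : A, π s a * (Qt s a - Qtar s a)| ≤ ε := by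
    intro π hpos hsum
    calc |∑ a : A, π s a * (Qt s a - Qtar s a)|
        ≤ ∑ a : A, |π s a * (Qt s a - Qtar s a)| := Finset.abs_sum_le_sum_abs _ _
      _ = ∑ a : A, π s a * |Qt s a - Qtar s a| := by
          refine Finset.sum_congr rfl fun a _ => ?_
          rw [abs_mul, abs_of_pos (hpos a)]
      _ ≤ ∑ a : A, π s a * ε := by
          refine Finset.sum_le_sum fun a _ => ?_
          exact mul_le_mul_of_nonneg_left (hQt s a) (hpos a).le
      _ = ε := by rw [← Finset.sum_mul, hsum, one_mul]
  have split : ∀ π : S → A → ℝ,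
      ∑ a : A, π s a * (Qtar s a - α * Real.log (π s a))
        = ∑ a : A, π s a * (Qt s a - α * Real.log (π s a))
          - ∑ a : A, π s a * (Qt s a - Qtar s a) := by
    intro π
    rw [← Finset.sum_sub_distrib]
    refine Finset.sum_congr rfl fun a _ => ?_
    ring
  have h1 : ∑ a : A, πg s a * (Qtar s a - α * Real.log (πg s a))
      ≥ ∑ a : A, πg s a * (Qt s a - α * Real.log (πg s a)) - ε := by
    rw [split πg]
    have := (abs_le.mp (key πg (hπg_pos s) (hπg_sum s))).2
    linarith
  have h2 : ∑ a : A, πg s a * (Qt s a - α * Real.log (πg s a))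
      ≥ ∑ a : A, πtar s a * (Qt s a - α * Real.log (πtar s a)) := by
    have : ∑ a : A, πg s a * (Qt s a - α * Real.log (πg s a))
        = ∑ a : A, πstar s a * (Qt s a - α * Real.log (πstar s a)) := by
      refine Finset.sum_congr rfl fun a _ => ?_
      rw [heq a]
    rw [this]
    exact hmax πtar hmem
  have h3 : ∑ a : A, πtar s a * (Qt s a - α * Real.log (πtar s a))
      ≥ Vtar s - ε := by
    have hs := split πtar
    have := (abs_le.mp (key πtar (hπtar_pos s) (hπtar_sum s))).1
    rw [hVtar s]
    linarith
  linarith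
end

section
/- Let π_tar be a policy with hard Q function Q_{π_tar} and value function V_{π_tar}. Let Q̃ : S × A → ℝ and ε ≥ 0 satisfy |Q̃(s,a) − Q_{π_tar}(s,a)| ≤ ε for all states s and actions a. Let π_g be a hard guidance policy formed from a finite set Π of policies containing π_tar using Q̃. Then for all states s, Σ_a π_g(a|s)·Q_{π_tar}(s,a) ≥ V_{π_tar}(s) − 2ε; that is, the expected advantage of π_g over π_tar at every state is at least −2ε. -/
/-- expected advantage of the hard guidance policy.
The hard guidance policy formed from an `ε`-accurate approximation of the
target policy's Q function has expected advantage at least `−2ε` over the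
target policy at every state: `Σ_a πg(a|s) Q_{πtar}(s,a) ≥ V_{πtar}(s) − 2ε`. -/
theorem hard_guidance_expected_advantage
    {S A : Type} [Fintype S] [Fintype A] [Nonempty S] [Nonempty A]
    -- MDP data
    (r : S → A → ℝ) (p : S → A → S → ℝ)
    (hp_nonneg : ∀ s a s', 0 ≤ p s a s')
    (hp_sum : ∀ s a, ∑ s' : S, p s a s' = 1)
    (γ : ℝ) (hγ0 : 0 ≤ γ) (hγ1 : γ < 1)
    -- target policy
    (πtar : S → A → ℝ)
    (hπtar_nonneg : ∀ s a, 0 ≤ πtar s a)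
    (hπtar_sum : ∀ s, ∑ a : A, πtar s a = 1)
    -- Bellman equations for the target policy
    (Qtar : S → A → ℝ) (Vtar : S → ℝ)
    (hQtar : ∀ s a, Qtar s a = r s a + γ * ∑ s' : S, p s a s' * Vtar s')
    (hVtar : ∀ s, Vtar s = ∑ a : A, πtar s a * Qtar s a)
    -- approximation of the Q function
    (Qt : S → A → ℝ) (ε : ℝ) (hε : 0 ≤ ε)
    (hQt : ∀ s a, |Qt s a - Qtar s a| ≤ ε)
    -- finite set of source policies containing the target policy
    (Ps : Finset (S → A → ℝ))
    (hPs_nonneg : ∀ π ∈ Ps, ∀ s a, 0 ≤ π s a)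
    (hPs_sum : ∀ π ∈ Ps, ∀ s, ∑ a : A, π s a = 1)
    (hmem : πtar ∈ Ps)
    -- hard guidance policy
    (πg : S → A → ℝ)
    (hπg_nonneg : ∀ s a, 0 ≤ πg s a)
    (hπg_sum : ∀ s, ∑ a : A, πg s a = 1)
    (hguide : ∀ s, ∃ πstar ∈ Ps,
      (∀ π ∈ Ps,
        ∑ a : A, π s a * Qt s a ≤ ∑ a : A, πstar s a * Qt s a) ∧
      (∀ a, πg s a = πstar s a)) :
    ∀ s, ∑ a : A, πg s a * Qtar s a ≥ Vtar s - 2 * ε := by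
  intro s
  obtain ⟨πstar, hπstar_mem, hmax, heq⟩ := hguide s
  have key : ∀ (π : S → A → ℝ), (∀ a, 0 ≤ π s a) → (∑ a : A, π s a = 1) →
      |∑ a : A, π s a * Qt s a - ∑ a : A, π s a * Qtar s a| ≤ ε := by
    intro π hnn hsum
    rw [← Finset.sum_sub_distrib]
    calc |∑ a : A, (π s a * Qt s a - π s a * Qtar s a)|
        ≤ ∑ a : A, |π s a * Qt s a - π s a * Qtar s a| := Finset.abs_sum_le_sum_abs _ _
      _ ≤ ∑ a : A, π s a * ε := by
          apply Finset.sum_le_sum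
          intro a _
          rw [← mul_sub, abs_mul, abs_of_nonneg (hnn a)]
          exact mul_le_mul_of_nonneg_left (hQt s a) (hnn a)
      _ = ε := by rw [← Finset.sum_mul, hsum, one_mul]
  have h1 := key πg (hπg_nonneg s) (hπg_sum s)
  have h2 := key πtar (hπtar_nonneg s) (hπtar_sum s)
  have h3 : ∑ a : A, πtar s a * Qt s a ≤ ∑ a : A, πg s a * Qt s a := by
    have := hmax πtar hmem
    calc ∑ a : A, πtar s a * Qt s a ≤ ∑ a : A, πstar s a * Qt s a := this
      _ = ∑ a : A, πg s a * Qt s a := by simp [heq]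
  rw [hVtar s]
  have a1 := abs_le.mp h1
  have a2 := abs_le.mp h2
  linarith [a1.1, a1.2, a2.1, a2.2]
end
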